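/- arXiv:2103.09215 — 5 statements merged into one kernel-verified Lean document; each statement's English description precedes it below -/
import Mathlib

section
/- Let T be a compact operator on a separable Hilbert space and let (Pₙ) be a sequence of mutually orthogonal orthogonal projections. Then the series ∑ₙ Pₙ T Pₙ converges in the strong operator topology and the limit is a compact operator. -/
open Filter Topology

/-- `P` is an orthogonal projection: idempotent and self-adjoint. -/
def IsOrthoProj {H : Type*} [NormedAddCommGroup H] [InnerProductSpace ℂ H] [CompleteSpace H]
    (P : H →L[ℂ] H) : Prop :=
  P ∘L P = P ∧ IsSelfAdjoint P

/-!
By Bessel's inequality `Pₙ x → 0` for every `x`, and a compact `T` turns this strong convergence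
into `‖Pₙ T‖ → 0`. Since the ranges of the `Pₙ` are mutually orthogonal, a finite block sum
`∑_{n ∈ s} Pₙ T Pₙ` has norm at most `max_{n ∈ s} ‖Pₙ T‖`, so the series is Cauchy in operator
norm. Its sum is then a norm limit of compact operators, and norm convergence implies strong
convergence.
-/

section CompactComp

variable {𝕜 E F G : Type*} [RCLike 𝕜] [NormedAddCommGroup E] [NormedSpace 𝕜 E]
  [NormedAddCommGroup F] [NormedSpace 𝕜 F] [NormedAddCommGroup G] [NormedSpace 𝕜 G]

theorem IsCompactOperator.tendsto_comp_of_tendsto_apply {ι : Type*} {l : Filter ι}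
    {T : E →L[𝕜] F} (hT : IsCompactOperator T) {A : ι → F →L[𝕜] G} {C : ℝ}
    (hA : ∀ i, ‖A i‖ ≤ C) (hA0 : ∀ y, Tendsto (fun i => A i y) l (𝓝 0)) :
    Tendsto (fun i => A i ∘L T) l (𝓝 0) := by
  obtain ⟨K, hK, hTK⟩ := hT.image_closedBall_subset_compact 1
  have : CompactSpace K := isCompact_iff_compactSpace.mp hK
  -- Ascoli: on a compact set, pointwise convergence of an equicontinuous family is uniform.
  have hequi : Equicontinuous fun i (y : K) => A i y := by
    have hA' : Equicontinuous fun i => ⇑(A i) := by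
      have h := (NormedSpace.equicontinuous_TFAE A).out 5 1
      exact h.mp ⟨C, hA⟩
    exact (equicontinuous_restrict_iff _).mpr (hA'.equicontinuousOn K)
  have hunif : TendstoUniformly (fun i (y : K) => A i y) 0 l :=
    UniformFun.tendsto_iff_tendstoUniformly.mp <|
      (hequi.tendsto_uniformFun_iff_pi l 0).mpr (tendsto_pi_nhds.mpr fun y => hA0 y)
  rw [Metric.tendsto_nhds]
  intro ε hε
  filter_upwards [Metric.tendstoUniformly_iff.mp hunif (ε / 2) (half_pos hε)] with i hi
  rw [dist_zero_right]
  refine lt_of_le_of_lt ?_ (half_lt_self hε)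
  refine ContinuousLinearMap.opNorm_le_of_unit_norm (half_pos hε).le fun x hx => ?_
  have hxK : T x ∈ K := hTK ⟨x, by simp [hx], rfl⟩
  simpa using (hi ⟨T x, hxK⟩).le

end CompactComp

theorem norm_sum_sq_eq_sum_norm_sq {𝕜 E ι : Type*} [RCLike 𝕜] [NormedAddCommGroup E]
    [InnerProductSpace 𝕜 E] (s : Finset ι) (v : ι → E)
    (hv : (s : Set ι).Pairwise fun i j => inner 𝕜 (v i) (v j) = 0) :
    ‖∑ i ∈ s, v i‖ ^ 2 = ∑ i ∈ s, ‖v i‖ ^ 2 := by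
  rw [← RCLike.ofReal_inj (K := 𝕜)]
  push_cast
  rw [← inner_self_eq_norm_sq_to_K, sum_inner]
  refine Finset.sum_congr rfl fun i hi => ?_
  rw [inner_sum, Finset.sum_eq_single_of_mem i hi fun j hj hji => hv hi hj hji.symm,
    inner_self_eq_norm_sq_to_K]

theorem IsStarProjection.norm_apply_le {𝕜 E : Type*} [RCLike 𝕜] [NormedAddCommGroup E]
    [InnerProductSpace 𝕜 E] [CompleteSpace E] {P : E →L[𝕜] E} (hP : IsStarProjection P)
    (x : E) : ‖P x‖ ≤ ‖x‖ := by
  simpa using P.le_of_opNorm_le (hP.norm_le P) x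

namespace IsOrthoProj

variable {H : Type*} [NormedAddCommGroup H] [InnerProductSpace ℂ H] [CompleteSpace H]

theorem isStarProjection {P : H →L[ℂ] H} (hP : IsOrthoProj P) : IsStarProjection P :=
  ⟨hP.1, hP.2⟩

variable {P : ℕ → H →L[ℂ] H} (hP : ∀ n, IsOrthoProj (P n))
  (hPo : ∀ m n, m ≠ n → P m ∘L P n = 0)
include hP hPo

theorem inner_apply_apply_eq_zero {m n : ℕ} (hmn : m ≠ n) (u v : H) :
    inner ℂ (P m u) (P n v) = 0 := by
  rw [← ContinuousLinearMap.adjoint_inner_right, (hP m).2.adjoint_eq,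
    ← ContinuousLinearMap.comp_apply, hPo m n hmn, zero_apply,
    inner_zero_right]

theorem norm_sum_apply_sq (s : Finset ℕ) (v : ℕ → H) :
    ‖∑ n ∈ s, P n (v n)‖ ^ 2 = ∑ n ∈ s, ‖P n (v n)‖ ^ 2 :=
  norm_sum_sq_eq_sum_norm_sq s _ fun _ _ _ _ hmn => inner_apply_apply_eq_zero hP hPo hmn _ _

theorem isStarProjection_sum (s : Finset ℕ) : IsStarProjection (∑ n ∈ s, P n) := by
  classical
  induction s using Finset.induction_on with
  | empty => simp [IsStarProjection.zero]
  | insert a s ha ih =>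
    rw [Finset.sum_insert ha]
    refine (hP a).isStarProjection.add ih ?_
    rw [Finset.mul_sum]
    exact Finset.sum_eq_zero fun n hn => hPo a n (ne_of_mem_of_not_mem hn ha).symm

theorem sum_norm_apply_sq_le (s : Finset ℕ) (x : H) : ∑ n ∈ s, ‖P n x‖ ^ 2 ≤ ‖x‖ ^ 2 := by
  rw [← norm_sum_apply_sq hP hPo s fun _ => x, ← sum_apply]
  gcongr
  exact (isStarProjection_sum hP hPo s).norm_apply_le x

theorem tendsto_apply_zero (x : H) : Tendsto (fun n => P n x) atTop (𝓝 0) := by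
  have hsum : Summable fun n => ‖P n x‖ ^ 2 :=
    summable_of_sum_range_le (fun _ => sq_nonneg _) fun _ => sum_norm_apply_sq_le hP hPo _ x
  rw [tendsto_zero_iff_norm_tendsto_zero]
  simpa using hsum.tendsto_atTop_zero.sqrt

theorem norm_sum_comp_comp_le {A : H →L[ℂ] H} {s : Finset ℕ} {C : ℝ} (hC : 0 ≤ C)
    (hA : ∀ n ∈ s, ‖P n ∘L A‖ ≤ C) : ‖∑ n ∈ s, P n ∘L A ∘L P n‖ ≤ C := by
  refine ContinuousLinearMap.opNorm_le_bound _ hC fun x => ?_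
  refine le_of_pow_le_pow_left₀ two_ne_zero (by positivity) ?_
  calc ‖(∑ n ∈ s, P n ∘L A ∘L P n) x‖ ^ 2 = ∑ n ∈ s, ‖P n (A (P n x))‖ ^ 2 := by
        rw [sum_apply]; exact norm_sum_apply_sq hP hPo s _
    _ ≤ ∑ n ∈ s, (C * ‖P n x‖) ^ 2 := by
        gcongr with n hn
        exact (P n ∘L A).le_of_opNorm_le (hA n hn) _
    _ = C ^ 2 * ∑ n ∈ s, ‖P n x‖ ^ 2 := by simp only [mul_pow, Finset.mul_sum]
    _ ≤ (C * ‖x‖) ^ 2 := by rw [mul_pow]; gcongr; exact sum_norm_apply_sq_le hP hPo s x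

theorem summable_comp_comp {T : H →L[ℂ] H} (hT : IsCompactOperator T) :
    Summable fun n => P n ∘L T ∘L P n := by
  have hdecay : Tendsto (fun n => ‖P n ∘L T‖) atTop (𝓝 0) :=
    tendsto_zero_iff_norm_tendsto_zero.mp <|
      hT.tendsto_comp_of_tendsto_apply (fun n => (hP n).isStarProjection.norm_le _)
        (tendsto_apply_zero hP hPo)
  rw [summable_iff_vanishing_norm]
  intro ε hε
  obtain ⟨N, hN⟩ := eventually_atTop.mp (hdecay.eventually (ge_mem_nhds (half_pos hε)))
  refine ⟨Finset.range N, fun t ht => ?_⟩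
  refine (norm_sum_comp_comp_le hP hPo (half_pos hε).le fun n hn => hN n ?_).trans_lt
    (half_lt_self hε)
  simpa using Finset.disjoint_left.mp ht hn

end IsOrthoProj

theorem stmt_2_general {H : Type*} [NormedAddCommGroup H] [InnerProductSpace ℂ H] [CompleteSpace H]
    (T : H →L[ℂ] H) (hT : IsCompactOperator (⇑T))
    (P : ℕ → H →L[ℂ] H) (hP : ∀ n, IsOrthoProj (P n))
    (hPo : ∀ m n, m ≠ n → P m ∘L P n = 0) :
    ∃ S : H →L[ℂ] H, IsCompactOperator (⇑S) ∧
      ∀ x : H, Tendsto (fun N : ℕ => ∑ n ∈ Finset.range N, (P n) (T ((P n) x)))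
        atTop (𝓝 (S x)) := by
  have hS := IsOrthoProj.summable_comp_comp hP hPo hT
  refine ⟨∑' n, P n ∘L T ∘L P n, ?_, fun x => ?_⟩
  · exact tsum_mem (s := compactOperator (RingHom.id ℂ) H H) isClosed_setOfPred_isCompactOperator
      fun n => (hT.comp_clm (P n)).clm_comp (P n)
  · exact (hS.hasSum.mapL (ContinuousLinearMap.apply ℂ H x)).tendsto_sum_nat

/-- If `T` is a compact operator on a separable Hilbert space and `(Pₙ)` is a sequence of
mutually orthogonal orthogonal projections, then the series `∑ₙ Pₙ T Pₙ` converges in the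
strong operator topology and its limit is a compact operator. -/
theorem stmt_2 {H : Type*} [NormedAddCommGroup H] [InnerProductSpace ℂ H] [CompleteSpace H]
    [TopologicalSpace.SeparableSpace H]
    (T : H →L[ℂ] H) (hT : IsCompactOperator (⇑T))
    (P : ℕ → H →L[ℂ] H) (hP : ∀ n, IsOrthoProj (P n))
    (hPo : ∀ m n, m ≠ n → P m ∘L P n = 0) :
    ∃ S : H →L[ℂ] H, IsCompactOperator (⇑S) ∧
      ∀ x : H, Tendsto (fun N : ℕ => ∑ n ∈ Finset.range N, (P n) (T ((P n) x)))
        atTop (𝓝 (S x)) :=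
  stmt_2_general T hT P hP hPo
end

section
/- Let T be a bounded operator that is a block band operator of bandwidth M relative to block decompositions (Pₙ) and (Qₙ), i.e., Qᵢ T Pⱼ = 0 whenever |i−j| > M. Then for each k with |k| ≤ M, the k-th block diagonal T_k = ∑ₙ Qₙ T P_{n+k} can be written as a finite sum ∑_{j=-M}^{M} Sⱼ T R_{k,j} where Sⱼ and R_{k,j} are orthogonal projections; in particular T_k lies in the two-sided ideal of B(H) generated by T. -/
open ContinuousLinearMap

/-!
The `k`-th block diagonal of `T` collects the blocks `Qₙ T Pₙ₊ₖ`. Split `n` into its residue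
classes `j` modulo `2M + 1`. The rows of one class are `2M + 1` apart, so by the band condition
`Qᵢ T Pₗ` with `i ≡ j` and `l ≡ j + k` vanishes unless `l = i + k`; hence compressing `T` between
the class projections `Sⱼ` and `R_{k,j}` keeps exactly the blocks of the `k`-th diagonal in
class `j`, and summing over the `2M + 1` classes recovers `T_k`.
-/

section ResidueClasses

def Int.icoProdEquiv (c : ℤ) {N : ℤ} (hN : 0 < N) : Finset.Ico c (c + N) × ℤ ≃ ℤ where
  toFun p := p.2 * N + p.1
  invFun n := (⟨c + (n - c) % N, by
    have := Int.emod_nonneg (n - c) hN.ne'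
    have := Int.emod_lt_of_pos (n - c) hN
    rw [Finset.mem_Ico]; omega⟩, (n - c) / N)
  left_inv := by
    rintro ⟨⟨j, hj⟩, m⟩
    rw [Finset.mem_Ico] at hj
    have hsplit : m * N + j - c = (j - c) + m * N := by ring
    have hmod : (j - c) % N = j - c := Int.emod_eq_of_lt (by omega) (by omega)
    have hdiv : (j - c) / N = 0 := Int.ediv_eq_zero_of_lt (by omega) (by omega)
    simp only [hsplit, Int.add_mul_emod_self_right, hmod, Int.add_mul_ediv_right _ _ hN.ne',
      hdiv, zero_add, Prod.mk.injEq, Subtype.mk.injEq, and_true]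
    ring
  right_inv n := by
    have := Int.ediv_mul_add_emod (n - c) N
    simp only
    linarith

variable {E : Type*} [AddCommMonoid E] [TopologicalSpace E] [ContinuousAdd E] [T3Space E]

theorem HasSum.eq_sum_Ico_of_hasSum_residueClass {f : ℤ → E} {a : E} {b : ℤ → E} {N : ℤ}
    (hN : 0 < N) (c : ℤ) (hf : HasSum f a) (hb : ∀ j, HasSum (fun m => f (m * N + j)) (b j)) :
    a = ∑ j ∈ Finset.Ico c (c + N), b j := by
  have hprod : HasSum (f ∘ Int.icoProdEquiv c hN) a := (Int.icoProdEquiv c hN).hasSum_iff.mpr hf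
  have hclasses := hprod.prod_fiberwise fun j => hb j
  rw [hclasses.unique (hasSum_fintype _), Finset.sum_coe_sort]

end ResidueClasses

theorem HasSum.map_eq_map_of_forall_ne {ι R E F : Type*} [Semiring R] [AddCommMonoid E]
    [Module R E] [TopologicalSpace E] [AddCommMonoid F] [Module R F] [TopologicalSpace F]
    [T2Space F] {f : ι → E} {y : E} (hf : HasSum f y) (A : E →L[R] F) (i : ι)
    (hA : ∀ n, n ≠ i → A (f n) = 0) : A y = A (f i) :=
  (hf.mapL A).unique (hasSum_single i hA)

section OrthoProj

variable {H : Type*} [NormedAddCommGroup H] [InnerProductSpace ℂ H] [CompleteSpace H]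

theorem exists_isOrthoProj_hasSum {ι : Type*} {Q : ι → H →L[ℂ] H} (hQ : ∀ i, IsOrthoProj (Q i))
    (hQo : ∀ i j, i ≠ j → Q i ∘L Q j = 0) (hsum : ∀ x, Summable fun i => Q i x) :
    ∃ S : H →L[ℂ] H, IsOrthoProj S ∧ ∀ x, HasSum (fun i => Q i x) (S x) := by
  let L : H →ₗ[ℂ] H :=
    { toFun x := ∑' i, Q i x
      map_add' x y := by simp only [map_add]; exact (hsum x).tsum_add (hsum y)
      map_smul' c x := by simp only [map_smul]; exact (hsum x).tsum_const_smul c }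
  have hL : ∀ x, HasSum (fun i => Q i x) (L x) := fun x => (hsum x).hasSum
  have hLsymm : L.IsSymmetric := by
    intro x y
    have hleft := (hL x).mapL (innerSLFlip ℂ y)
    have hright := (hL y).mapL (innerSL ℂ x)
    simp only [innerSLFlip_apply_apply, innerSL_apply_apply] at hleft hright
    exact hleft.unique (hright.congr_fun fun i => (isSelfAdjoint_iff_isSymmetric.mp (hQ i).2) x y)
  -- Hellinger–Toeplitz: an everywhere defined symmetric operator is bounded.
  let S : H →L[ℂ] H := ⟨L, hLsymm.continuous⟩
  have hS : ∀ x, HasSum (fun i => Q i x) (S x) := hL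
  refine ⟨S, ⟨?_, isSelfAdjoint_iff_isSymmetric.mpr hLsymm⟩, hS⟩
  ext x
  have hfix : ∀ i, Q i x = Q i (S x) := fun i => by
    rw [(hS x).map_eq_map_of_forall_ne (Q i) i fun j hji => by
      rw [← comp_apply, hQo i j hji.symm, zero_apply]]
    rw [← comp_apply, (hQ i).1]
  exact ((hS (S x)).congr_fun hfix).unique (hS x)

theorem exists_isOrthoProj_hasSum_comp {ι κ : Type*} {Q : ι → H →L[ℂ] H}
    (hQ : ∀ i, IsOrthoProj (Q i)) (hQo : ∀ i j, i ≠ j → Q i ∘L Q j = 0)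
    (hsum : ∀ x, Summable fun i => Q i x) {σ : κ → ι} (hσ : Function.Injective σ) :
    ∃ S : H →L[ℂ] H, IsOrthoProj S ∧ ∀ x, HasSum (fun n => Q (σ n) x) (S x) :=
  exists_isOrthoProj_hasSum (fun n => hQ (σ n)) (fun _ _ h => hQo _ _ (hσ.ne h))
    fun x => (hsum x).comp_injective hσ

end OrthoProj

theorem Int.lt_abs_mul_add_sub_mul_add_of_ne {M k m n j : ℤ} (hk : |k| ≤ M) (hmn : m ≠ n) :
    M < |m * (2 * M + 1) + j - (n * (2 * M + 1) + j + k)| := by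
  have hmn' : 1 ≤ |m - n| := Int.one_le_abs (sub_ne_zero.mpr hmn)
  have hM : 0 ≤ M := (abs_nonneg k).trans hk
  calc M < |m - n| * (2 * M + 1) - |k| := by nlinarith
    _ = |(m - n) * (2 * M + 1)| - |k| := by rw [abs_mul, abs_of_pos (show 0 < 2 * M + 1 by omega)]
    _ ≤ |(m - n) * (2 * M + 1) - k| := abs_sub_abs_le_abs_sub _ _
    _ = |m * (2 * M + 1) + j - (n * (2 * M + 1) + j + k)| := by ring_nf

section Band

variable {𝕜 E F : Type*} [Semiring 𝕜] [AddCommMonoid E] [Module 𝕜 E] [TopologicalSpace E]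
  [AddCommMonoid F] [Module 𝕜 F] [TopologicalSpace F] [T2Space F]

theorem hasSum_comp_comp_apply_of_band {T : E →L[𝕜] F} {P : ℤ → E →L[𝕜] E} {Q : ℤ → F →L[𝕜] F}
    {M : ℕ} (hband : ∀ i j : ℤ, |i - j| > (M : ℤ) → Q i ∘L T ∘L P j = 0) {k : ℤ}
    (hk : |k| ≤ (M : ℤ)) {j : ℤ} {S : F →L[𝕜] F} {R : E →L[𝕜] E}
    (hS : ∀ y, HasSum (fun n : ℤ => Q (n * (2 * (M : ℤ) + 1) + j) y) (S y))
    (hR : ∀ x, HasSum (fun n : ℤ => P (n * (2 * (M : ℤ) + 1) + j + k) x) (R x)) (x : E) :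
    HasSum (fun m : ℤ => Q (m * (2 * (M : ℤ) + 1) + j) (T (P (m * (2 * (M : ℤ) + 1) + j + k) x)))
      ((S ∘L T ∘L R) x) := by
  refine (hS (T (R x))).congr_fun fun m => ?_
  refine ((hR x).map_eq_map_of_forall_ne (Q (m * (2 * (M : ℤ) + 1) + j) ∘L T) m
    fun n hnm => ?_).symm
  rw [← comp_apply, comp_assoc, hband _ _ (Int.lt_abs_mul_add_sub_mul_add_of_ne hk hnm.symm),
    zero_apply]

end Band

theorem stmt_7_general {H : Type*} [NormedAddCommGroup H] [InnerProductSpace ℂ H] [CompleteSpace H]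
    (T : H →L[ℂ] H) (M : ℕ)
    (P Q : ℤ → H →L[ℂ] H)
    (hP : ∀ n, IsOrthoProj (P n)) (hQ : ∀ n, IsOrthoProj (Q n))
    (hPo : ∀ m n, m ≠ n → P m ∘L P n = 0) (hQo : ∀ m n, m ≠ n → Q m ∘L Q n = 0)
    (hPI : ∀ x : H, HasSum (fun n : ℤ => (P n) x) x)
    (hQI : ∀ x : H, HasSum (fun n : ℤ => (Q n) x) x)
    (hband : ∀ i j : ℤ, |i - j| > (M : ℤ) → Q i ∘L T ∘L P j = 0)
    (k : ℤ) (hk : |k| ≤ (M : ℤ))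
    (Tk : H →L[ℂ] H)
    (hTk : ∀ x : H, HasSum (fun n : ℤ => (Q n) (T ((P (n + k)) x))) (Tk x)) :
    ∃ S R : ℤ → H →L[ℂ] H,
      (∀ j, IsOrthoProj (S j)) ∧ (∀ j, IsOrthoProj (R j)) ∧
      (∀ j, ∀ x : H,
        HasSum (fun n : ℤ => (Q (n * (2 * (M : ℤ) + 1) + j)) x) ((S j) x)) ∧
      (∀ j, ∀ x : H,
        HasSum (fun n : ℤ => (P (n * (2 * (M : ℤ) + 1) + j + k)) x) ((R j) x)) ∧
      Tk = ∑ j ∈ Finset.Icc (-(M : ℤ)) (M : ℤ), S j ∘L T ∘L R j ∧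
      Tk ∈ TwoSidedIdeal.span {T} := by
  have hW : (0 : ℤ) < 2 * M + 1 := by omega
  have hinj (j : ℤ) : Function.Injective fun n : ℤ => n * (2 * M + 1) + j :=
    fun _ _ h => mul_right_cancel₀ hW.ne' (add_right_cancel h)
  choose S hS hSsum using fun j =>
    exists_isOrthoProj_hasSum_comp hQ hQo (fun x => (hQI x).summable) (hinj j)
  choose R hR hRsum using fun j =>
    exists_isOrthoProj_hasSum_comp hP hPo (fun x => (hPI x).summable)
      fun _ _ h => hinj j (add_right_cancel h)
  have hdiag : Tk = ∑ j ∈ Finset.Icc (-(M : ℤ)) M, S j ∘L T ∘L R j := by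
    ext x
    have hIcc : Finset.Icc (-(M : ℤ)) M = Finset.Ico (-(M : ℤ)) (-M + (2 * M + 1)) := by
      ext; simp only [Finset.mem_Icc, Finset.mem_Ico]; omega
    have hfibres (j : ℤ) := hasSum_comp_comp_apply_of_band hband hk (hSsum j) (hRsum j) x
    rw [sum_apply, hIcc]
    exact (hTk x).eq_sum_Ico_of_hasSum_residueClass hW (-M) hfibres
  refine ⟨S, R, hS, hR, hSsum, hRsum, hdiag, ?_⟩
  rw [hdiag]
  exact sum_mem fun j _ => TwoSidedIdeal.mul_mem_left _ _ _ <|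
    TwoSidedIdeal.mul_mem_right _ _ _ <| TwoSidedIdeal.subset_span rfl

/-- Let `T` be an (asymmetric) block band operator of bandwidth `M` relative to the block
decompositions `(Pₙ)_{n ∈ ℤ}` and `(Qₙ)_{n ∈ ℤ}` (mutually orthogonal projections summing
strongly to the identity), i.e. `Qᵢ T Pⱼ = 0` whenever `|i − j| > M`.  Then for each `k` with
`|k| ≤ M`, the `k`-th block diagonal `T_k = ∑ₙ Qₙ T P_{n+k}` (SOT limit) is a finite sum
`∑_{j=-M}^{M} Sⱼ T R_{k,j}` where `Sⱼ = ∑ₙ Q_{n(2M+1)+j}` and `R_{k,j} = ∑ₙ P_{n(2M+1)+j+k}`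
are orthogonal projections; in particular `T_k` lies in the two-sided ideal generated by `T`. -/
theorem stmt_7 {H : Type*} [NormedAddCommGroup H] [InnerProductSpace ℂ H] [CompleteSpace H]
    [TopologicalSpace.SeparableSpace H]
    (T : H →L[ℂ] H) (M : ℕ)
    (P Q : ℤ → H →L[ℂ] H)
    (hP : ∀ n, IsOrthoProj (P n)) (hQ : ∀ n, IsOrthoProj (Q n))
    (hPo : ∀ m n, m ≠ n → P m ∘L P n = 0) (hQo : ∀ m n, m ≠ n → Q m ∘L Q n = 0)
    (hPI : ∀ x : H, HasSum (fun n : ℤ => (P n) x) x)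
    (hQI : ∀ x : H, HasSum (fun n : ℤ => (Q n) x) x)
    (hband : ∀ i j : ℤ, |i - j| > (M : ℤ) → Q i ∘L T ∘L P j = 0)
    (k : ℤ) (hk : |k| ≤ (M : ℤ))
    (Tk : H →L[ℂ] H)
    (hTk : ∀ x : H, HasSum (fun n : ℤ => (Q n) (T ((P (n + k)) x))) (Tk x)) :
    ∃ S R : ℤ → H →L[ℂ] H,
      (∀ j, IsOrthoProj (S j)) ∧ (∀ j, IsOrthoProj (R j)) ∧
      (∀ j, ∀ x : H,
        HasSum (fun n : ℤ => (Q (n * (2 * (M : ℤ) + 1) + j)) x) ((S j) x)) ∧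
      (∀ j, ∀ x : H,
        HasSum (fun n : ℤ => (P (n * (2 * (M : ℤ) + 1) + j + k)) x) ((R j) x)) ∧
      Tk = ∑ j ∈ Finset.Icc (-(M : ℤ)) (M : ℤ), S j ∘L T ∘L R j ∧
      Tk ∈ TwoSidedIdeal.span {T} :=
  stmt_7_general T M P Q hP hQ hPo hQo hPI hQI hband k hk Tk hTk
end

section
/- Fan's theorem for finite matrices: if A is an n×n complex matrix with diagonal entries d₁,…,dₙ, then for every m ≤ n, the sum of the m largest values among |d₁|,…,|dₙ| is at most the sum of the m largest singular values of A. -/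
/-!
Diagonalize `Aᴴ A = V diag(σ²) Vᴴ` with `V` unitary and put `W = A V`, so that the columns of
`W` are orthogonal with norms `σ j` and `A = W Vᴴ`. Then `|A i i| ≤ ∑ j, S i j * σ j` with
`S i j = (|W i j| / σ j) |V i j|`. By Cauchy–Schwarz, `S` is doubly substochastic: the columns
of `V` and of `W / σ` are unit vectors (or zero), and their rows have norm at most one (`V` is
unitary; Bessel's inequality for the orthonormal family of nonzero columns of `W / σ`). Summing
over a set `s` of `m` rows gives column weights `c j ∈ [0, 1]` with `∑ c ≤ m`, and a
threshold argument bounds `∑ c j σ j` by the sum of the `m` largest `σ j`.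
-/

open scoped ComplexOrder

/-- The singular values of a square complex matrix, as the square roots of the eigenvalues of
`Aᴴ * A` (unordered; order is irrelevant for `sumTop` below). -/
noncomputable def singVals {N : ℕ} (A : Matrix (Fin N) (Fin N) ℂ) : Fin N → ℝ :=
  fun i => Real.sqrt ((Matrix.posSemidef_conjTranspose_mul_self A).isHermitian.eigenvalues i)

/-- The sum of the `m` largest values of a finite family `f : Fin N → ℝ`, expressed as the
supremum of the sums over subsets of cardinality `min m N`. -/
noncomputable def sumTop {N : ℕ} (f : Fin N → ℝ) (m : ℕ) : ℝ :=
  sSup {x | ∃ s : Finset (Fin N), s.card = min m N ∧ x = ∑ i ∈ s, f i}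

namespace Finset

variable {ι : Type*}

theorem sum_mul_le_one_of_sum_sq_le_one {s : Finset ι} {f g : ι → ℝ}
    (hf : ∑ i ∈ s, f i ^ 2 ≤ 1) (hg : ∑ i ∈ s, g i ^ 2 ≤ 1) : ∑ i ∈ s, f i * g i ≤ 1 := by
  have hcs := sum_mul_sq_le_sq_mul_sq s f g
  have hg₀ : 0 ≤ ∑ i ∈ s, g i ^ 2 := sum_nonneg fun i _ => sq_nonneg (g i)
  nlinarith [mul_le_one₀ hf hg₀ hg]

variable [Fintype ι]

theorem exists_card_eq_forall_notMem_le (f : ι → ℝ) {m : ℕ} (hm : m ≤ Fintype.card ι) :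
    ∃ s : Finset ι, s.card = m ∧ ∀ i ∈ s, ∀ j ∉ s, f j ≤ f i := by
  classical
  obtain ⟨s, hs, hmax⟩ := (univ.powersetCard m).exists_max_image (fun s => ∑ i ∈ s, f i)
    (powersetCard_nonempty.2 (by simpa using hm))
  rw [mem_powersetCard_univ] at hs
  refine ⟨s, hs, fun i hi j hj => not_lt.1 fun hlt => ?_⟩
  have hj' : j ∉ s.erase i := fun h => hj (mem_of_mem_erase h)
  have hcard : (insert j (s.erase i)).card = m := by
    rw [card_insert_of_notMem hj', card_erase_of_mem hi, hs]
    exact Nat.sub_add_cancel (hs ▸ card_pos.2 ⟨i, hi⟩)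
  have := hmax _ (mem_powersetCard_univ.2 hcard)
  rw [sum_insert hj', sum_erase_eq_sub hi] at this
  linarith

theorem exists_card_eq_threshold {σ : ι → ℝ} (hσ : ∀ j, 0 ≤ σ j) {m : ℕ}
    (hm : m ≤ Fintype.card ι) :
    ∃ s : Finset ι, s.card = m ∧
      ∃ t, 0 ≤ t ∧ (∀ i ∈ s, t ≤ σ i) ∧ ∀ j ∉ s, σ j ≤ t := by
  obtain ⟨s, hs, hle⟩ := exists_card_eq_forall_notMem_le σ hm
  refine ⟨s, hs, ?_⟩
  rcases s.eq_empty_or_nonempty with rfl | hne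
  · exact ⟨∑ j, σ j, sum_nonneg fun j _ => hσ j, by simp,
      fun j _ => single_le_sum (fun k _ => hσ k) (mem_univ j)⟩
  · exact ⟨s.inf' hne σ, le_inf' hne σ fun i _ => hσ i, fun i hi => inf'_le σ hi,
      fun j hj => le_inf' hne σ fun i hi => hle i hi j hj⟩

theorem exists_card_eq_sum_mul_le {σ c : ι → ℝ} (hσ : ∀ j, 0 ≤ σ j) (hc₀ : ∀ j, 0 ≤ c j)
    (hc₁ : ∀ j, c j ≤ 1) {m : ℕ} (hcm : ∑ j, c j ≤ m) (hm : m ≤ Fintype.card ι) :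
    ∃ s : Finset ι, s.card = m ∧ ∑ j, c j * σ j ≤ ∑ j ∈ s, σ j := by
  classical
  obtain ⟨s, hs, t, ht, hts, hst⟩ := exists_card_eq_threshold hσ hm
  refine ⟨s, hs, ?_⟩
  -- termwise, `(c j - 𝟙[j ∈ s]) * (σ j - t) ≤ 0`
  have hterm : ∀ j, c j * σ j - (if j ∈ s then σ j else 0) ≤
      t * (c j - if j ∈ s then 1 else 0) := by
    intro j
    split_ifs with hj
    · nlinarith [hts j hj, hc₁ j]
    · nlinarith [hst j hj, hc₀ j]
  have hsum := sum_le_sum fun j (_ : j ∈ univ) => hterm j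
  simp only [sum_sub_distrib, ← mul_sum, sum_ite_mem, univ_inter, sum_const, hs,
    nsmul_eq_mul, mul_one] at hsum
  linarith [mul_nonpos_of_nonneg_of_nonpos ht (sub_nonpos.2 hcm)]

theorem exists_card_eq_sum_sum_mul_le {κ : Type*} [Fintype κ] {S : ι → κ → ℝ}
    {σ : κ → ℝ} (hS : ∀ i j, 0 ≤ S i j) (hrow : ∀ i, ∑ j, S i j ≤ 1)
    (hcol : ∀ j, ∑ i, S i j ≤ 1) (hσ : ∀ j, 0 ≤ σ j) {s : Finset ι}
    (hs : s.card ≤ Fintype.card κ) :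
    ∃ t : Finset κ, t.card = s.card ∧ ∑ i ∈ s, ∑ j, S i j * σ j ≤ ∑ j ∈ t, σ j := by
  have hc₁ : ∀ j, ∑ i ∈ s, S i j ≤ 1 := fun j =>
    (sum_le_sum_of_subset_of_nonneg (subset_univ s) fun i _ _ => hS i j).trans (hcol j)
  have hcs : ∑ j, ∑ i ∈ s, S i j ≤ s.card := by
    rw [sum_comm]
    exact (sum_le_sum fun i _ => hrow i).trans (by simp)
  obtain ⟨t, ht, hle⟩ :=
    exists_card_eq_sum_mul_le hσ (fun j => sum_nonneg fun i _ => hS i j) hc₁ hcs hs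
  refine ⟨t, ht, le_of_eq_of_le ?_ hle⟩
  simp_rw [sum_mul]
  exact sum_comm

end Finset

open Finset

namespace Matrix

variable {𝕜 ι κ : Type*} [RCLike 𝕜] [Fintype ι] [DecidableEq κ] {M : Matrix ι κ 𝕜} {σ : κ → ℝ}

theorem sum_norm_sq_col_of_conjTranspose_mul_self_eq_diagonal
    (hM : Mᴴ * M = diagonal fun j => ((σ j ^ 2 : ℝ) : 𝕜)) (j : κ) :
    ∑ i, ‖M i j‖ ^ 2 = σ j ^ 2 := by
  have h := congrFun (congrFun hM j) j
  simp only [mul_apply, conjTranspose_apply, RCLike.star_def, RCLike.conj_mul,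
    diagonal_apply_eq] at h
  exact_mod_cast h

-- For `σ j = 0` the column `j` vanishes, and `x / 0 = 0` keeps the normalized entries
-- `‖M i j‖ / σ j` meaningful.
theorem sum_norm_div_sq_col_le_one [Fintype κ]
    (hM : Mᴴ * M = diagonal fun j => ((σ j ^ 2 : ℝ) : 𝕜)) (j : κ) :
    ∑ i, (‖M i j‖ / σ j) ^ 2 ≤ 1 := by
  simp_rw [div_pow, ← sum_div, sum_norm_sq_col_of_conjTranspose_mul_self_eq_diagonal hM]
  exact div_self_le_one _

theorem mul_norm_div_eq_norm [Fintype κ]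
    (hM : Mᴴ * M = diagonal fun j => ((σ j ^ 2 : ℝ) : 𝕜)) (i : ι) (j : κ) :
    σ j * (‖M i j‖ / σ j) = ‖M i j‖ := by
  rcases eq_or_ne (σ j) 0 with h | h
  · have hcol := sum_norm_sq_col_of_conjTranspose_mul_self_eq_diagonal hM j
    rw [h, zero_pow two_ne_zero, sum_eq_zero_iff_of_nonneg fun _ _ => sq_nonneg _] at hcol
    simp [h, pow_eq_zero_iff two_ne_zero |>.1 (hcol i (mem_univ i))]
  · exact mul_div_cancel₀ _ h

/-- Bessel's inequality for the normalized nonzero columns of `M`. -/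
theorem sum_norm_div_sq_row_le_one [Fintype κ]
    (hM : Mᴴ * M = diagonal fun j => ((σ j ^ 2 : ℝ) : 𝕜)) (i : ι) :
    ∑ j, (‖M i j‖ / σ j) ^ 2 ≤ 1 := by
  classical
  let u : {j // σ j ≠ 0} → EuclideanSpace 𝕜 ι := fun j =>
    ((σ j : 𝕜)⁻¹) • WithLp.toLp 2 fun i => M i j
  have hu : Orthonormal 𝕜 u := by
    rw [orthonormal_iff_ite]
    intro j k
    have h : star (fun i => M i j) ⬝ᵥ (fun i => M i k) = _ := congrFun (congrFun hM j) k
    simp only [u, inner_smul_left, inner_smul_right, EuclideanSpace.inner_toLp_toLp,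
      dotProduct_comm _ (star _), h, diagonal_apply, Subtype.ext_iff]
    split_ifs with hjk
    · rw [hjk]
      have hk : (σ k : 𝕜) ≠ 0 := RCLike.ofReal_ne_zero.2 k.2
      simp only [map_inv₀, RCLike.conj_ofReal]
      push_cast
      field_simp
    · simp
  have hbessel := hu.sum_inner_products_le (x := EuclideanSpace.single i (1 : 𝕜)) (s := univ)
  have hterm : ∀ j, ‖inner 𝕜 (u j) (EuclideanSpace.single i (1 : 𝕜))‖ ^ 2 =
      (‖M i j‖ / σ j) ^ 2 := by
    intro j
    simp [u, EuclideanSpace.inner_single_right, div_eq_inv_mul, mul_pow]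
  simp only [hterm, PiLp.norm_single, norm_one, one_pow] at hbessel
  rwa [← sum_subtype (univ.filter fun j => σ j ≠ 0) (by simp) fun j => (‖M i j‖ / σ j) ^ 2,
    sum_filter_of_ne fun j _ h hj => by simp [hj] at h] at hbessel

theorem exists_card_eq_sum_norm_diag_le [DecidableEq ι] {A V : Matrix ι ι 𝕜}
    (hV : V ∈ unitaryGroup ι 𝕜) {σ : ι → ℝ} (hσ : ∀ j, 0 ≤ σ j)
    (hAV : (A * V)ᴴ * (A * V) = diagonal fun j => ((σ j ^ 2 : ℝ) : 𝕜)) (s : Finset ι) :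
    ∃ t : Finset ι, t.card = s.card ∧ ∑ i ∈ s, ‖A i i‖ ≤ ∑ j ∈ t, σ j := by
  have hVV : Vᴴ * V = diagonal fun _ => (((1 : ℝ) ^ 2 : ℝ) : 𝕜) := by
    rw [← star_eq_conjTranspose, mem_unitaryGroup_iff'.1 hV]
    simp
  set W := A * V
  set S : ι → ι → ℝ := fun i j => ‖W i j‖ / σ j * ‖V i j‖
  have hdiag : ∀ i, ‖A i i‖ ≤ ∑ j, S i j * σ j := by
    intro i
    have hA : A = W * Vᴴ := by
      rw [mul_assoc, ← star_eq_conjTranspose, mem_unitaryGroup_iff.1 hV, mul_one]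
    calc ‖A i i‖ = ‖∑ j, W i j * star (V i j)‖ := by
          rw [hA, mul_apply]; rfl
      _ ≤ ∑ j, ‖W i j‖ * ‖V i j‖ := (norm_sum_le _ _).trans_eq (by simp)
      _ = ∑ j, S i j * σ j := by
          refine sum_congr rfl fun j _ => ?_
          rw [← mul_norm_div_eq_norm hAV i j]
          ring
  obtain ⟨t, ht, hle⟩ := exists_card_eq_sum_sum_mul_le (S := S)
    (fun i j => mul_nonneg (div_nonneg (norm_nonneg _) (hσ j)) (norm_nonneg _))
    (fun i => sum_mul_le_one_of_sum_sq_le_one (sum_norm_div_sq_row_le_one hAV i)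
      (by simpa using sum_norm_div_sq_row_le_one hVV i))
    (fun j => sum_mul_le_one_of_sum_sq_le_one (sum_norm_div_sq_col_le_one hAV j)
      (by simpa using sum_norm_div_sq_col_le_one hVV j))
    hσ (s := s) (card_le_univ s)
  exact ⟨t, ht, (sum_le_sum fun i _ => hdiag i).trans hle⟩

end Matrix

open Matrix

section SingularValues

variable {n : ℕ} (A : Matrix (Fin n) (Fin n) ℂ)

noncomputable def rightSingularVectors : Matrix (Fin n) (Fin n) ℂ :=
  (posSemidef_conjTranspose_mul_self A).isHermitian.eigenvectorUnitary

theorem rightSingularVectors_mem_unitaryGroup :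
    rightSingularVectors A ∈ unitaryGroup (Fin n) ℂ :=
  Subtype.prop _

theorem singVals_nonneg (j : Fin n) : 0 ≤ singVals A j :=
  Real.sqrt_nonneg _

theorem conjTranspose_mul_self_mul_rightSingularVectors :
    (A * rightSingularVectors A)ᴴ * (A * rightSingularVectors A) =
      diagonal fun j => ((singVals A j ^ 2 : ℝ) : ℂ) := by
  have hA := posSemidef_conjTranspose_mul_self A
  have h := hA.isHermitian.conjStarAlgAut_star_eigenvectorUnitary
  rw [Unitary.conjStarAlgAut_star_apply] at h
  simp_rw [singVals, Real.sq_sqrt (hA.eigenvalues_nonneg _)]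
  rw [rightSingularVectors, conjTranspose_mul, ← star_eq_conjTranspose, mul_assoc,
    ← mul_assoc Aᴴ, ← mul_assoc, h]
  rfl

end SingularValues

theorem le_sumTop {N : ℕ} (f : Fin N → ℝ) (m : ℕ) (s : Finset (Fin N))
    (hs : s.card = min m N) : ∑ i ∈ s, f i ≤ sumTop f m :=
  le_csSup ((Set.finite_range fun s : Finset (Fin N) => ∑ i ∈ s, f i).subset
    (by rintro _ ⟨s, -, rfl⟩; exact ⟨s, rfl⟩)).bddAbove ⟨s, hs, rfl⟩

theorem sumTop_le {N : ℕ} (f : Fin N → ℝ) (m : ℕ) {b : ℝ}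
    (h : ∀ s : Finset (Fin N), s.card = min m N → ∑ i ∈ s, f i ≤ b) : sumTop f m ≤ b := by
  obtain ⟨s, -, hs⟩ := (univ : Finset (Fin N)).exists_subset_card_eq (n := min m N) (by simp)
  exact csSup_le ⟨_, s, hs, rfl⟩ fun _ ⟨s, hs, hx⟩ => hx ▸ h s hs

/-- Fan's theorem for finite matrices: for every `m ≤ n`, the sum of the `m` largest absolute
values of diagonal entries of `A` is at most the sum of the `m` largest singular values of `A`. -/
theorem stmt_9 {n : ℕ} (A : Matrix (Fin n) (Fin n) ℂ) :
    ∀ m : ℕ, m ≤ n → sumTop (fun i => ‖A i i‖) m ≤ sumTop (singVals A) m := by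
  intro m _
  refine sumTop_le _ _ fun s hs => ?_
  obtain ⟨t, ht, hle⟩ := exists_card_eq_sum_norm_diag_le
    (rightSingularVectors_mem_unitaryGroup A) (singVals_nonneg A)
    (conjTranspose_mul_self_mul_rightSingularVectors A) s
  exact hle.trans (le_sumTop _ _ t (ht.trans hs))
end

section
/- Equality case of the pinching theorem for finite matrices: with A and its pinching B as above, if the singular values of B coincide (with multiplicity) with those of A, then B = A. -/
open scoped ComplexOrder

/-- The pinching of `A` relative to the partition given by the block assignment `blk`. -/
def pinch {N : ℕ} {α : Type*} [DecidableEq α] (A : Matrix (Fin N) (Fin N) ℂ) (blk : Fin N → α) :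
    Matrix (Fin N) (Fin N) ℂ :=
  fun i j => if blk i = blk j then A i j else 0

/-! Both `A` and its pinching `B` have squared singular values summing to their squared
Frobenius norms, `tr (Aᴴ A) = ∑ |A i j|²`. Pinching only deletes entries, so equal singular values force
every deleted entry to vanish. -/

open scoped Matrix

lemma Finset.sum_comp_eq_of_map_univ_eq {ι β M : Type*} [Fintype ι] [AddCommMonoid M]
    {f g : ι → β} (h : Multiset.map f Finset.univ.val = Multiset.map g Finset.univ.val)
    (φ : β → M) : ∑ i, φ (f i) = ∑ i, φ (g i) := by
  simpa only [Finset.sum, Multiset.map_map, Function.comp_def] using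
    congrArg (fun s => (s.map φ).sum) h

lemma Matrix.trace_conjTranspose_mul_self_eq_sum_normSq {m n : Type*} [Fintype m] [Fintype n]
    (A : Matrix m n ℂ) : (Aᴴ * A).trace = ∑ i, ∑ j, (Complex.normSq (A i j) : ℂ) := by
  rw [Matrix.trace, Finset.sum_comm]
  simp [Matrix.mul_apply, Complex.normSq_eq_conj_mul_self]

lemma sum_singVals_sq {N : ℕ} (A : Matrix (Fin N) (Fin N) ℂ) :
    ∑ i, singVals A i ^ 2 = ∑ i, ∑ j, Complex.normSq (A i j) := by
  have hA := Matrix.posSemidef_conjTranspose_mul_self A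
  have hsq : ∀ i, singVals A i ^ 2 = hA.isHermitian.eigenvalues i := fun i =>
    Real.sq_sqrt (hA.eigenvalues_nonneg i)
  have htrace := hA.isHermitian.trace_eq_sum_eigenvalues
  rw [Matrix.trace_conjTranspose_mul_self_eq_sum_normSq] at htrace
  simp_rw [hsq]
  apply Complex.ofReal_injective
  push_cast
  simpa using htrace.symm

lemma normSq_pinch_le {N : ℕ} {α : Type*} [DecidableEq α] (A : Matrix (Fin N) (Fin N) ℂ)
    (blk : Fin N → α) (i j : Fin N) : Complex.normSq (pinch A blk i j) ≤ Complex.normSq (A i j) := by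
  unfold pinch
  split_ifs
  · exact le_rfl
  · simpa using Complex.normSq_nonneg (A i j)

lemma pinch_eq_self_of_sum_normSq_eq {N : ℕ} {α : Type*} [DecidableEq α]
    (A : Matrix (Fin N) (Fin N) ℂ) (blk : Fin N → α)
    (h : ∑ i, ∑ j, Complex.normSq (pinch A blk i j) = ∑ i, ∑ j, Complex.normSq (A i j)) :
    pinch A blk = A := by
  simp only [← Finset.sum_product', Finset.univ_product_univ] at h
  have heq := (Finset.sum_eq_sum_iff_of_le fun p _ => normSq_pinch_le A blk p.1 p.2).mp h
  ext i j
  by_cases hij : blk i = blk j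
  · simp [pinch, hij]
  · have hzero : Complex.normSq (A i j) = 0 := by
      simpa [pinch, hij] using (heq (i, j) (Finset.mem_univ _)).symm
    simp [pinch, hij, Complex.normSq_eq_zero.mp hzero]

/-- Equality case of the pinching theorem: if the singular values of the pinching `B` of `A`
coincide with those of `A` counted with multiplicity, then `B = A`. -/
theorem stmt_11 {N : ℕ} {α : Type*} [DecidableEq α] (A : Matrix (Fin N) (Fin N) ℂ)
    (blk : Fin N → α)
    (h : Multiset.map (singVals (pinch A blk)) Finset.univ.val =
      Multiset.map (singVals A) Finset.univ.val) :
    pinch A blk = A := by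
  apply pinch_eq_self_of_sum_normSq_eq
  rw [← sum_singVals_sq, ← sum_singVals_sq]
  exact Finset.sum_comp_eq_of_map_univ_eq h (· ^ 2)
end

section
/- For a finite N×N matrix A, a partition of indices, and the generalized diagonal D = ∑_n Q_n A P_{n+k} formed from the block projections shifted by k, the singular values of D are submajorized by those of A. -/
open scoped ComplexOrder

/-- The diagonal 0-1 projection matrix picking out the indices in block `n` of the partition
of `Fin N` encoded by the block-assignment map `p : Fin N → ℤ`. -/
def blockProj {N : ℕ} (p : Fin N → ℤ) (n : ℤ) : Matrix (Fin N) (Fin N) ℂ :=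
  Matrix.diagonal fun i => if p i = n then 1 else 0

/-!
With `ζ` a primitive `M`-th root of unity, `M` larger than every `|p l - q i - k|`, the
generalized diagonal is the unitary average `D = M⁻¹ ∑_{j < M} Uʲ A Vʲ` of `A`, where
`U = diag(ζ^(-(q i + k)))` and `V = diag(ζ^(p l))`: the entry `(i, l)` of `Uʲ A Vʲ` carries the
phase `ζ^(j (p l - q i - k))`, whose average vanishes unless `p l = q i + k`.
The sum of the `m` largest singular values of `X` is the maximum of `∑ₜ Re ⟪uₜ, X vₜ⟫` over
families of at most `m` pairwise orthogonal vectors of norm at most one (the bound comes from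
expanding in singular vectors, AM-GM, Bessel and the bathtub principle). It is therefore
unitarily invariant and convex, and the average can only decrease it.
-/
open Finset Matrix
open scoped InnerProductSpace

section SumTop

variable {N : ℕ}

theorem sumTop_eq_sup' (f : Fin N → ℝ) (m : ℕ) :
    sumTop f m = (powersetCard (min m N) univ).sup' (powersetCard_nonempty.2 (by simp))
      fun s => ∑ i ∈ s, f i := by
  rw [sup'_eq_csSup_image, sumTop]
  congr 1
  ext x
  simp only [Set.mem_ofPred_eq, Set.mem_image, mem_coe, mem_powersetCard_univ]
  exact ⟨fun ⟨s, hs, hx⟩ => ⟨s, hs, hx.symm⟩, fun ⟨s, hs, hx⟩ => ⟨s, hs, hx.symm⟩⟩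

theorem sum_le_sumTop (f : Fin N → ℝ) (m : ℕ) {s : Finset (Fin N)} (hs : #s = min m N) :
    ∑ i ∈ s, f i ≤ sumTop f m := by
  rw [sumTop_eq_sup']
  exact le_sup' (fun s => ∑ i ∈ s, f i) (mem_powersetCard_univ.2 hs)

theorem exists_card_eq_sumTop_eq (f : Fin N → ℝ) (m : ℕ) :
    ∃ s : Finset (Fin N), #s = min m N ∧ sumTop f m = ∑ i ∈ s, f i := by
  rw [sumTop_eq_sup']
  obtain ⟨s, hs, h⟩ := exists_mem_eq_sup' _ fun s : Finset (Fin N) => ∑ i ∈ s, f i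
  exact ⟨s, mem_powersetCard_univ.1 hs, h⟩

/-- The bathtub principle. -/
theorem sum_mul_le_sum_of_forall_le {ι : Type*} [Fintype ι] [DecidableEq ι] {f d : ι → ℝ}
    {s : Finset ι} (hf : ∀ i, 0 ≤ f i) (hfs : ∀ i ∉ s, ∀ j ∈ s, f i ≤ f j)
    (hd0 : ∀ i, 0 ≤ d i) (hd1 : ∀ i, d i ≤ 1) (hd : ∑ i, d i ≤ #s) :
    ∑ i, f i * d i ≤ ∑ i ∈ s, f i := by
  rcases s.eq_empty_or_nonempty with rfl | hs
  · have hd_zero : ∀ i ∈ univ, d i = 0 :=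
      (sum_eq_zero_iff_of_nonneg fun i _ => hd0 i).1 (le_antisymm (by simpa using hd)
        (sum_nonneg fun i _ => hd0 i))
    simp [fun i => hd_zero i (mem_univ i)]
  set t := s.inf' hs f
  have hcompl : ∑ i ∈ sᶜ, d i ≤ ∑ i ∈ s, (1 - d i) := by
    rw [sum_sub_distrib, sum_const, nsmul_one]
    linarith [sum_add_sum_compl s d]
  calc ∑ i, f i * d i = ∑ i ∈ s, f i * d i + ∑ i ∈ sᶜ, f i * d i :=
        (sum_add_sum_compl s _).symm
    _ ≤ ∑ i ∈ s, f i * d i + ∑ i ∈ sᶜ, t * d i := by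
        gcongr with i hi
        · exact hd0 i
        · exact le_inf' hs f (hfs i (mem_compl.1 hi))
    _ ≤ ∑ i ∈ s, f i * d i + ∑ i ∈ s, t * (1 - d i) := by
        rw [← mul_sum, ← mul_sum]
        gcongr
        exact le_inf' hs f fun j _ => hf j
    _ ≤ ∑ i ∈ s, f i * d i + ∑ i ∈ s, f i * (1 - d i) := by
        gcongr with i hi
        · linarith [hd1 i]
        · exact inf'_le f hi
    _ = ∑ i ∈ s, f i := by
        rw [← sum_add_distrib]
        exact sum_congr rfl fun i _ => by ring

theorem sum_mul_le_sumTop {f : Fin N → ℝ} (hf : ∀ i, 0 ≤ f i) {d : Fin N → ℝ}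
    (hd0 : ∀ i, 0 ≤ d i) (hd1 : ∀ i, d i ≤ 1) {m : ℕ} (hd : ∑ i, d i ≤ m) :
    ∑ i, f i * d i ≤ sumTop f m := by
  obtain ⟨s, hs, hsum⟩ := exists_card_eq_sumTop_eq f m
  have hfs : ∀ i ∉ s, ∀ j ∈ s, f i ≤ f j := by
    intro i hi j hj
    have hswap := sum_le_sumTop f m (s := insert i (s.erase j)) (by
      rw [card_insert_of_notMem fun h => hi (mem_of_mem_erase h), card_erase_of_mem hj, hs]
      have := card_pos.2 ⟨j, hj⟩
      omega)
    rw [sum_insert fun h => hi (mem_of_mem_erase h), hsum, ← add_sum_erase s f hj] at hswap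
    linarith
  have hdN : ∑ i, d i ≤ N := by
    simpa using sum_le_sum fun i (_ : i ∈ univ) => hd1 i
  rw [hsum]
  exact sum_mul_le_sum_of_forall_le hf hfs hd0 hd1 (by rw [hs, Nat.cast_min]; exact le_min hd hdN)

theorem sum_mul_sum_le_sumTop {ι : Type*} {f : Fin N → ℝ} (hf : ∀ i, 0 ≤ f i) {s : Finset ι}
    {m : ℕ} (hs : #s ≤ m) {a b : ι → Fin N → ℝ} (ha : ∀ t i, 0 ≤ a t i) (hb : ∀ t i, 0 ≤ b t i)
    (ha_col : ∀ i, ∑ t ∈ s, a t i ^ 2 ≤ 1) (hb_col : ∀ i, ∑ t ∈ s, b t i ^ 2 ≤ 1)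
    (ha_row : ∀ t ∈ s, ∑ i, a t i ^ 2 ≤ 1) (hb_row : ∀ t ∈ s, ∑ i, b t i ^ 2 ≤ 1) :
    ∑ i, f i * ∑ t ∈ s, a t i * b t i ≤ sumTop f m := by
  have amgm : ∀ t i, a t i * b t i ≤ (a t i ^ 2 + b t i ^ 2) / 2 := fun t i => by
    linarith [two_mul_le_add_sq (a t i) (b t i)]
  refine sum_mul_le_sumTop hf (fun i => sum_nonneg fun t _ => mul_nonneg (ha t i) (hb t i))
    (fun i => ?_) ?_
  · calc ∑ t ∈ s, a t i * b t i ≤ ∑ t ∈ s, (a t i ^ 2 + b t i ^ 2) / 2 :=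
          sum_le_sum fun t _ => amgm t i
      _ ≤ 1 := by rw [← sum_div, sum_add_distrib]; linarith [ha_col i, hb_col i]
  · calc ∑ i, ∑ t ∈ s, a t i * b t i ≤ ∑ t ∈ s, ∑ i, (a t i ^ 2 + b t i ^ 2) / 2 := by
          rw [sum_comm]; exact sum_le_sum fun t _ => sum_le_sum fun i _ => amgm t i
      _ ≤ ∑ t ∈ s, 1 := sum_le_sum fun t ht => by
          rw [← sum_div, sum_add_distrib]; linarith [ha_row t ht, hb_row t ht]
      _ ≤ m := by simpa using hs

end SumTop

section SubOrthonormal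

variable (𝕜 : Type*) {E F ι : Type*} [RCLike 𝕜] [NormedAddCommGroup E] [InnerProductSpace 𝕜 E]
  [NormedAddCommGroup F] [InnerProductSpace 𝕜 F]

def IsSubOrthonormal (u : ι → E) : Prop :=
  Pairwise (fun s t => ⟪u s, u t⟫_𝕜 = 0) ∧ ∀ t, ‖u t‖ ≤ 1

variable {𝕜} {u : ι → E}

theorem Orthonormal.isSubOrthonormal (hu : Orthonormal 𝕜 u) : IsSubOrthonormal 𝕜 u :=
  ⟨hu.2, fun t => (hu.1 t).le⟩

theorem IsSubOrthonormal.comp_linearIsometry (hu : IsSubOrthonormal 𝕜 u) (f : E →ₗᵢ[𝕜] F) :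
    IsSubOrthonormal 𝕜 (f ∘ u) :=
  ⟨fun s t hst => by simpa using hu.1 hst, fun t => by simpa using hu.2 t⟩

theorem IsSubOrthonormal.sum_norm_inner_sq_le (hu : IsSubOrthonormal 𝕜 u)
    (s : Finset ι) (x : E) : ∑ t ∈ s, ‖⟪u t, x⟫_𝕜‖ ^ 2 ≤ ‖x‖ ^ 2 := by
  set S := ∑ t ∈ s, ‖⟪u t, x⟫_𝕜‖ ^ 2
  set y := ∑ t ∈ s, ⟪u t, x⟫_𝕜 • u t
  have hyx : RCLike.re ⟪y, x⟫_𝕜 = S := by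
    simp only [y, S, sum_inner, inner_smul_left, RCLike.conj_mul, map_sum, ← RCLike.ofReal_pow,
      RCLike.ofReal_re]
  have hyy : ‖y‖ ^ 2 ≤ S := by
    have hdiag : ∀ t ∈ s, ∑ t' ∈ s, starRingEnd 𝕜 ⟪u t', x⟫_𝕜 * ⟪u t', u t⟫_𝕜 =
        starRingEnd 𝕜 ⟪u t, x⟫_𝕜 * ((‖u t‖ ^ 2 : ℝ) : 𝕜) := fun t ht => by
      rw [sum_eq_single t (fun t' _ h => by rw [hu.1 h, mul_zero]) (absurd ht),
        inner_self_eq_norm_sq_to_K, RCLike.ofReal_pow]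
    rw [@norm_sq_eq_re_inner 𝕜]
    simp only [y, sum_inner, inner_sum, inner_smul_left, inner_smul_right]
    rw [sum_congr rfl fun t ht => by rw [hdiag t ht], map_sum]
    refine sum_le_sum fun t _ => ?_
    rw [← mul_assoc, mul_comm _ (starRingEnd 𝕜 _), RCLike.conj_mul, ← RCLike.ofReal_pow,
      ← RCLike.ofReal_mul, RCLike.ofReal_re]
    exact mul_le_of_le_one_right (sq_nonneg _) (pow_le_one₀ (norm_nonneg _) (hu.2 t))
  have hS : S ≤ ‖y‖ * ‖x‖ := hyx ▸ re_inner_le_norm y x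
  have hS0 : 0 ≤ S := sum_nonneg fun t _ => sq_nonneg _
  nlinarith [norm_nonneg y, norm_nonneg x]

end SubOrthonormal

section KyFan

variable {N : ℕ} (A : Matrix (Fin N) (Fin N) ℂ)

local notation "𝒯" => toEuclideanCLM (n := Fin N) (𝕜 := ℂ)

theorem inner_toEuclideanCLM_left (x y : EuclideanSpace ℂ (Fin N)) :
    ⟪𝒯 A x, y⟫_ℂ = ⟪x, 𝒯 Aᴴ y⟫_ℂ := by
  rw [← star_eq_conjTranspose, map_star, ContinuousLinearMap.star_eq_adjoint,
    ContinuousLinearMap.adjoint_inner_right]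

theorem toEuclideanCLM_mul_apply (B : Matrix (Fin N) (Fin N) ℂ) (x : EuclideanSpace ℂ (Fin N)) :
    𝒯 (A * B) x = 𝒯 A (𝒯 B x) := by
  rw [map_mul]
  rfl

theorem IsSubOrthonormal.toEuclideanCLM_comp {ι : Type*} {u : ι → EuclideanSpace ℂ (Fin N)}
    (hu : IsSubOrthonormal ℂ u) {W : Matrix (Fin N) (Fin N) ℂ} (hW : W ∈ unitaryGroup (Fin N) ℂ) :
    IsSubOrthonormal ℂ (𝒯 W ∘ u) :=
  hu.comp_linearIsometry (Unitary.linearIsometryEquiv ⟨𝒯 W, Unitary.map_mem _ hW⟩).toLinearIsometry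

noncomputable def rightSingVec : OrthonormalBasis (Fin N) ℂ (EuclideanSpace ℂ (Fin N)) :=
  (posSemidef_conjTranspose_mul_self A).isHermitian.eigenvectorBasis

-- zero when `singVals A i = 0`, since `(0 : ℂ)⁻¹ = 0`
noncomputable def leftSingVec (i : Fin N) : EuclideanSpace ℂ (Fin N) :=
  (singVals A i : ℂ)⁻¹ • 𝒯 A (rightSingVec A i)

theorem inner_toEuclideanCLM_rightSingVec (i j : Fin N) :
    ⟪𝒯 A (rightSingVec A i), 𝒯 A (rightSingVec A j)⟫_ℂ =
      if i = j then ((singVals A j ^ 2 : ℝ) : ℂ) else 0 := by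
  have hA := posSemidef_conjTranspose_mul_self A
  have heig : 𝒯 (Aᴴ * A) (rightSingVec A j) =
      (hA.isHermitian.eigenvalues j : ℂ) • rightSingVec A j := by
    ext l
    simpa [rightSingVec, ofLp_toEuclideanCLM] using
      congrFun (hA.isHermitian.mulVec_eigenvectorBasis j) l
  rw [inner_toEuclideanCLM_left, ← toEuclideanCLM_mul_apply, heig,
    inner_smul_right, orthonormal_iff_ite.1 (rightSingVec A).orthonormal,
    singVals, Real.sq_sqrt (hA.eigenvalues_nonneg j)]
  split_ifs <;> simp

theorem norm_toEuclideanCLM_rightSingVec (i : Fin N) :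
    ‖𝒯 A (rightSingVec A i)‖ = singVals A i := by
  have h' : ‖𝒯 A (rightSingVec A i)‖ ^ 2 = singVals A i ^ 2 := by
    rw [norm_sq_eq_re_inner (𝕜 := ℂ), inner_toEuclideanCLM_rightSingVec, if_pos rfl,
      RCLike.re_to_complex, Complex.ofReal_re]
  exact (pow_left_inj₀ (norm_nonneg _) (Real.sqrt_nonneg _) two_ne_zero).1 h'

theorem toEuclideanCLM_rightSingVec (i : Fin N) :
    𝒯 A (rightSingVec A i) = (singVals A i : ℂ) • leftSingVec A i := by
  rcases eq_or_ne (singVals A i) 0 with h | h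
  · rw [h, Complex.ofReal_zero, zero_smul, ← norm_eq_zero, norm_toEuclideanCLM_rightSingVec, h]
  · rw [leftSingVec, smul_inv_smul₀ (by exact_mod_cast h)]

theorem isSubOrthonormal_leftSingVec : IsSubOrthonormal ℂ (leftSingVec A) := by
  refine ⟨fun i j hij => ?_, fun i => ?_⟩
  · simp only [leftSingVec, inner_smul_left, inner_smul_right,
      inner_toEuclideanCLM_rightSingVec, if_neg hij, mul_zero]
  · rw [leftSingVec, norm_smul, norm_inv, Complex.norm_real, norm_toEuclideanCLM_rightSingVec]
    exact inv_mul_le_one_of_le₀ (le_abs_self _) (abs_nonneg _)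

theorem re_inner_leftSingVec_toEuclideanCLM_rightSingVec (i : Fin N) :
    RCLike.re ⟪leftSingVec A i, 𝒯 A (rightSingVec A i)⟫_ℂ = singVals A i := by
  rw [leftSingVec, inner_smul_left, inner_toEuclideanCLM_rightSingVec, if_pos rfl]
  simp only [Complex.conj_ofReal, RCLike.re_to_complex, ← Complex.ofReal_inv,
    ← Complex.ofReal_mul, Complex.ofReal_re]
  rw [inv_mul_eq_div, sq, mul_self_div_self]

theorem re_inner_toEuclideanCLM_le (x y : EuclideanSpace ℂ (Fin N)) :
    RCLike.re ⟪x, 𝒯 A y⟫_ℂ ≤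
      ∑ i, singVals A i * (‖⟪x, leftSingVec A i⟫_ℂ‖ * ‖⟪rightSingVec A i, y⟫_ℂ‖) := by
  have hexpand : ⟪x, 𝒯 A y⟫_ℂ =
      ∑ i, (singVals A i : ℂ) * (⟪x, leftSingVec A i⟫_ℂ * ⟪rightSingVec A i, y⟫_ℂ) := by
    conv_lhs => rw [← (rightSingVec A).sum_repr' y]
    simp only [map_sum, map_smul, toEuclideanCLM_rightSingVec, inner_sum, inner_smul_right]
    exact sum_congr rfl fun i _ => by ring
  calc RCLike.re ⟪x, 𝒯 A y⟫_ℂ ≤ ‖⟪x, 𝒯 A y⟫_ℂ‖ := RCLike.re_le_norm _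
    _ ≤ _ := hexpand ▸ norm_sum_le _ _
    _ = _ := by simp [abs_of_nonneg (Real.sqrt_nonneg _), singVals]

theorem sum_re_inner_toEuclideanCLM_le_sumTop {ι : Type*} {u v : ι → EuclideanSpace ℂ (Fin N)}
    (hu : IsSubOrthonormal ℂ u) (hv : IsSubOrthonormal ℂ v) {s : Finset ι} {m : ℕ}
    (hs : #s ≤ m) : ∑ t ∈ s, RCLike.re ⟪u t, 𝒯 A (v t)⟫_ℂ ≤ sumTop (singVals A) m := by
  have hσ : ∀ i, 0 ≤ singVals A i := fun i => Real.sqrt_nonneg _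
  calc ∑ t ∈ s, RCLike.re ⟪u t, 𝒯 A (v t)⟫_ℂ
      ≤ ∑ t ∈ s, ∑ i, singVals A i * (‖⟪u t, leftSingVec A i⟫_ℂ‖ * ‖⟪rightSingVec A i, v t⟫_ℂ‖) :=
        sum_le_sum fun t _ => re_inner_toEuclideanCLM_le A _ _
    _ = ∑ i, singVals A i * ∑ t ∈ s, ‖⟪u t, leftSingVec A i⟫_ℂ‖ * ‖⟪rightSingVec A i, v t⟫_ℂ‖ := by
        rw [sum_comm]
        simp only [mul_sum]
    _ ≤ sumTop (singVals A) m := by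
        refine sum_mul_sum_le_sumTop hσ hs (fun _ _ => norm_nonneg _) (fun _ _ => norm_nonneg _)
          (fun i => ?_) (fun i => ?_) (fun t _ => ?_) (fun t _ => ?_)
        · exact (hu.sum_norm_inner_sq_le s _).trans
            (pow_le_one₀ (norm_nonneg _) ((isSubOrthonormal_leftSingVec A).2 i))
        · simp_rw [norm_inner_symm (rightSingVec A i)]
          exact (hv.sum_norm_inner_sq_le s _).trans (by simp)
        · simp_rw [norm_inner_symm (u t)]
          exact ((isSubOrthonormal_leftSingVec A).sum_norm_inner_sq_le univ _).trans
            (pow_le_one₀ (norm_nonneg _) (hu.2 t))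
        · rw [(rightSingVec A).sum_sq_norm_inner_right]
          exact pow_le_one₀ (norm_nonneg _) (hv.2 t)

theorem exists_sumTop_singVals_eq_sum_re_inner (m : ℕ) :
    ∃ s : Finset (Fin N), #s ≤ m ∧ sumTop (singVals A) m =
      ∑ i ∈ s, RCLike.re ⟪leftSingVec A i, 𝒯 A (rightSingVec A i)⟫_ℂ := by
  obtain ⟨s, hs, hsum⟩ := exists_card_eq_sumTop_eq (singVals A) m
  refine ⟨s, hs.trans_le (min_le_left m N), ?_⟩
  simp only [hsum, re_inner_leftSingVec_toEuclideanCLM_rightSingVec]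

theorem sumTop_singVals_sum_smul_unitary_le {ι : Type*} {t : Finset ι} {w : ι → ℝ}
    (hw0 : ∀ j ∈ t, 0 ≤ w j) (hw1 : ∑ j ∈ t, w j = 1) {U V : ι → Matrix (Fin N) (Fin N) ℂ}
    (hU : ∀ j ∈ t, U j ∈ unitaryGroup (Fin N) ℂ) (hV : ∀ j ∈ t, V j ∈ unitaryGroup (Fin N) ℂ)
    (m : ℕ) :
    sumTop (singVals (∑ j ∈ t, (w j : ℂ) • (U j * A * V j))) m ≤ sumTop (singVals A) m := by
  set B := ∑ j ∈ t, (w j : ℂ) • (U j * A * V j)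
  set u := leftSingVec B
  set v := rightSingVec B
  have hterm : ∀ i, RCLike.re ⟪u i, 𝒯 B (v i)⟫_ℂ =
      ∑ j ∈ t, w j * RCLike.re ⟪𝒯 (U j)ᴴ (u i), 𝒯 A (𝒯 (V j) (v i))⟫_ℂ := fun i => by
    simp only [B, map_sum, map_smul, FunLike.coe_sum, Finset.sum_apply,
      FunLike.coe_smul, Pi.smul_apply, inner_sum, inner_smul_right,
      toEuclideanCLM_mul_apply, inner_toEuclideanCLM_left, conjTranspose_conjTranspose,
      RCLike.re_to_complex, Complex.re_ofReal_mul]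
  obtain ⟨s, hs, hsum⟩ := exists_sumTop_singVals_eq_sum_re_inner B m
  calc sumTop (singVals B) m
      = ∑ j ∈ t, w j * ∑ i ∈ s, RCLike.re ⟪𝒯 (U j)ᴴ (u i), 𝒯 A (𝒯 (V j) (v i))⟫_ℂ := by
        rw [hsum, sum_congr rfl fun i _ => hterm i, sum_comm]
        simp only [mul_sum]
    _ ≤ ∑ j ∈ t, w j * sumTop (singVals A) m := by
        gcongr with j hj
        · exact hw0 j hj
        exact sum_re_inner_toEuclideanCLM_le_sumTop A
          ((isSubOrthonormal_leftSingVec B).toEuclideanCLM_comp (Unitary.star_mem (hU j hj)))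
          (v.orthonormal.isSubOrthonormal.toEuclideanCLM_comp (hV j hj)) hs
    _ = sumTop (singVals A) m := by rw [← sum_mul, hw1, one_mul]

end KyFan

theorem IsPrimitiveRoot.geom_sum_zpow_eq {R : Type*} [Field R] {ζ : R} {M : ℕ}
    (hζ : IsPrimitiveRoot ζ M) (d : ℤ) :
    ∑ j ∈ range M, (ζ ^ d) ^ j = if (M : ℤ) ∣ d then (M : R) else 0 := by
  split_ifs with h
  · simp [(hζ.zpow_eq_one_iff_dvd d).2 h]
  · have hM : (ζ ^ d) ^ M = 1 := by
      rw [← zpow_natCast, ← _root_.zpow_mul, mul_comm, _root_.zpow_mul, zpow_natCast,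
        hζ.pow_eq_one, _root_.one_zpow]
    rw [geom_sum_eq (mt (hζ.zpow_eq_one_iff_dvd d).1 h), hM, sub_self, zero_div]

theorem Matrix.diagonal_mem_unitaryGroup {n 𝕜 : Type*} [Fintype n] [DecidableEq n] [RCLike 𝕜]
    {v : n → 𝕜} (hv : ∀ i, ‖v i‖ = 1) : diagonal v ∈ unitaryGroup n 𝕜 := by
  rw [mem_unitaryGroup_iff', star_eq_conjTranspose, diagonal_conjTranspose,
    diagonal_mul_diagonal, ← diagonal_one]
  congr 1
  funext i
  simp [RCLike.conj_mul, hv i]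

theorem Matrix.sum_diagonal_pow_mul_mul_diagonal_pow_apply {n R : Type*} [Fintype n]
    [DecidableEq n] [CommSemiring R] (u v : n → R) (A : Matrix n n R) (M : ℕ) (i l : n) :
    (∑ j ∈ range M, diagonal u ^ j * A * diagonal v ^ j) i l =
      (∑ j ∈ range M, (u i * v l) ^ j) * A i l := by
  simp only [Matrix.sum_apply, diagonal_pow, mul_diagonal, diagonal_mul, Pi.pow_apply, sum_mul]
  exact sum_congr rfl fun j _ => by ring

theorem sum_smul_diagonal_zpow_pow_mul_mul {n : Type*} [Fintype n] [DecidableEq n] {ζ : ℂ}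
    {M : ℕ} (hζ : IsPrimitiveRoot ζ M) (hM : M ≠ 0) {a b : n → ℤ}
    (hab : ∀ i l, (b l - a i).natAbs < M) (A : Matrix n n ℂ) :
    ∑ j ∈ range M, (((M : ℝ)⁻¹ : ℝ) : ℂ) •
        (diagonal (fun i => ζ ^ (-a i)) ^ j * A * diagonal (fun l => ζ ^ b l) ^ j) =
      of fun i l => if b l = a i then A i l else 0 := by
  ext i l
  have hdvd : (M : ℤ) ∣ b l - a i ↔ b l = a i :=
    ⟨fun h => sub_eq_zero.1 (Int.eq_zero_of_dvd_of_natAbs_lt_natAbs h (by simpa using hab i l)),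
      fun h => by rw [h, sub_self]; exact dvd_zero _⟩
  rw [← smul_sum, Matrix.smul_apply, sum_diagonal_pow_mul_mul_diagonal_pow_apply,
    ← zpow_add₀ (hζ.ne_zero hM), neg_add_eq_sub, hζ.geom_sum_zpow_eq, of_apply]
  simp only [hdvd]
  split_ifs
  · rw [smul_eq_mul, Complex.ofReal_inv, Complex.ofReal_natCast,
      inv_mul_cancel_left₀ (Nat.cast_ne_zero.2 hM)]
  · rw [zero_mul, smul_zero]

theorem sum_blockProj_mul_mul_blockProj {N : ℕ} (A : Matrix (Fin N) (Fin N) ℂ) (p q : Fin N → ℤ)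
    (k : ℤ) {s : Finset ℤ} (hs : ∀ i, q i ∈ s) :
    ∑ n ∈ s, blockProj q n * A * blockProj p (n + k) =
      of fun i l => if p l = q i + k then A i l else 0 := by
  ext i l
  rw [Matrix.sum_apply, sum_eq_single (q i)]
  · simp [blockProj, eq_comm]
  · intro n _ hn
    simp [blockProj, Ne.symm hn]
  · exact fun h => absurd (hs i) h

/-- Generalized diagonal theorem for finite matrices: for two partitions of `Fin N` into
blocks indexed by `ℤ` (encoded by `p, q : Fin N → ℤ`, with block projections
`P n = blockProj p n`, `Q n = blockProj q n`; only finitely many are nonzero), the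
generalized diagonal `D = ∑ n, Q n * A * P (n + k)` (a finite sum, taken over any finite set
of indices containing all blocks of `q`) has singular values submajorized by those of `A`. -/
theorem stmt_13 {N : ℕ} (A : Matrix (Fin N) (Fin N) ℂ) (p q : Fin N → ℤ) (k : ℤ)
    (s : Finset ℤ) (hs : ∀ i, q i ∈ s)
    (D : Matrix (Fin N) (Fin N) ℂ)
    (hD : D = ∑ n ∈ s, blockProj q n * A * blockProj p (n + k)) :
    ∀ m : ℕ, sumTop (singVals D) m ≤ sumTop (singVals A) m := by
  intro m
  obtain ⟨B, hB⟩ := Finite.exists_le fun il : Fin N × Fin N => (p il.2 - (q il.1 + k)).natAbs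
  obtain ⟨M, hM0, hM⟩ : ∃ M : ℕ, M ≠ 0 ∧ ∀ i l, (p l - (q i + k)).natAbs < M :=
    ⟨B + 1, B.succ_ne_zero, fun i l => Nat.lt_succ_of_le (hB (i, l))⟩
  have hζ := Complex.isPrimitiveRoot_exp M hM0
  have hphase : ∀ (a : Fin N → ℤ) (j : ℕ),
      diagonal (fun i => Complex.exp (2 * Real.pi * Complex.I / M) ^ a i) ^ j ∈
        unitaryGroup (Fin N) ℂ := fun a j =>
    pow_mem (diagonal_mem_unitaryGroup fun i => by
      rw [norm_zpow, hζ.norm'_eq_one hM0, _root_.one_zpow]) j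
  rw [hD, sum_blockProj_mul_mul_blockProj A p q k hs,
    ← sum_smul_diagonal_zpow_pow_mul_mul hζ hM0 hM]
  refine sumTop_singVals_sum_smul_unitary_le A (fun _ _ => by positivity) ?_
    (fun j _ => hphase _ j) (fun j _ => hphase _ j) m
  rw [sum_const, card_range, nsmul_eq_mul, mul_inv_cancel₀ (Nat.cast_ne_zero.2 hM0)]
end
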